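/- arXiv:2101.00544 — 2 statements merged into one kernel-verified Lean document; each statement's English description precedes it below -/
import Mathlib

section
/- (Crapo's quadrilateral arrangement is non-very generic.) Let Q₁, Q₂, Q₃, Q₄ ∈ ℝ² be four points, no three of which are collinear, and let f₁,…,f₆ be linear functionals on ℝ², every two of which are linearly independent, satisfying f₁(Q₂−Q₁) = 0, f₂(Q₃−Q₁) = 0, f₃(Q₄−Q₁) = 0, f₄(Q₃−Q₂) = 0, f₅(Q₄−Q₂) = 0, f₆(Q₄−Q₃) = 0 (so the six central lines ker fᵢ are parallel to the six sides and diagonals of the quadrilateral Q₁Q₂Q₃Q₄). Let L₁ = {1,2,3}, L₂ = {1,4,5}, L₃ = {2,4,6}, L₄ = {3,5,6}. Then D_{L₁} ∩ D_{L₂} ∩ D_{L₃} ⊆ D_{L₄}, and consequently X = D_{L₁} ∩ D_{L₂} ∩ D_{L₃} ∩ D_{L₄} is a linear subspace of ℝ⁶ of codimension 3 (rank 3, strictly less than its multiplicity 4). -/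
/-!
If the translated lines at the vertices `Q₀, Q₁, Q₂` are concurrent, at `P₀, P₁, P₂` say, then
each side `PᵢPⱼ` lies on a translate of the line through `QᵢQⱼ`, so it is parallel to `QᵢQⱼ`.
Since `Q₀Q₁Q₂` is a genuine triangle, all three sides are scaled by the same factor `a`: the `Pᵢ`
are the images of the `Qᵢ` under `x ↦ p + a • x` (possibly with `a = 0`). The same map sends `Q₃`
to a point lying on the three lines at the fourth vertex. So `X` is the image of the
injective linear map `(p, a) ↦ t` recording these translations, and `dim X = 3`.
-/

noncomputable section

/-- `D f S` : translations `t ∈ ℝⁿ` for which the translated lines/hyperplanes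
`Hᵢ^{tᵢ} = {x : fᵢ(x) = tᵢ}`, `i ∈ S`, have a common point. -/
def D {n k : ℕ} (f : Fin n → ((Fin k → ℝ) →ₗ[ℝ] ℝ)) (S : Finset (Fin n)) :
    Set (Fin n → ℝ) :=
  {t | ∃ x : Fin k → ℝ, ∀ i ∈ S, f i x = t i}

open Module

theorem linearIndependent_vsub_of_not_collinear {k V P : Type*} [DivisionRing k] [AddCommGroup V]
    [Module k V] [AddTorsor V P] {p₀ p₁ p₂ : P} (h : ¬ Collinear k ({p₀, p₁, p₂} : Set P)) :
    LinearIndependent k ![p₁ -ᵥ p₀, p₂ -ᵥ p₀] := by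
  rw [← affineIndependent_iff_not_collinear_set,
    affineIndependent_iff_linearIndependent_vsub k _ (0 : Fin 3),
    ← linearIndependent_equiv (finSuccAboveEquiv (0 : Fin 3))] at h
  convert! h
  ext i
  fin_cases i <;> rfl

section LinearAlgebra

variable {K V : Type*} [Field K] [AddCommGroup V] [Module K V]

theorem LinearMap.eq_zero_of_linearIndependent_pair (hV : finrank K V = 2) {g : V →ₗ[K] K}
    {v w : V} (hvw : LinearIndependent K ![v, w]) (hv : g v = 0) (hw : g w = 0) : g = 0 := by
  have hspan := hvw.span_eq_top_of_card_eq_finrank (by simp [hV])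
  refine LinearMap.ext_on_range hspan fun i => ?_
  fin_cases i <;> simpa

theorem exists_eq_smul_of_apply_eq_zero (hV : finrank K V = 2) {g : V →ₗ[K] K} (hg : g ≠ 0)
    {v w : V} (hv0 : v ≠ 0) (hv : g v = 0) (hw : g w = 0) : ∃ a : K, w = a • v := by
  by_contra! h
  exact hg (g.eq_zero_of_linearIndependent_pair hV
    ((LinearIndependent.pair_iff' hv0).2 fun a => (h a).symm) hv hw)

theorem smul_eq_of_sub_eq_smul {Q₀ Q₁ Q₂ P₀ P₁ P₂ : V} {a b c : K}
    (hQ : LinearIndependent K ![Q₁ - Q₀, Q₂ - Q₀])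
    (h₀₁ : P₁ - P₀ = a • (Q₁ - Q₀)) (h₀₂ : P₂ - P₀ = b • (Q₂ - Q₀))
    (h₁₂ : P₂ - P₁ = c • (Q₂ - Q₁)) : a = b := by
  have key : (c - a) • (Q₁ - Q₀) + (b - c) • (Q₂ - Q₀) = 0 := by
    linear_combination (norm := module) h₀₁ - h₀₂ + h₁₂
  obtain ⟨h₁, h₂⟩ := LinearIndependent.pair_iff.1 hQ _ _ key
  linear_combination -h₁ - h₂

end LinearAlgebra

def quadrilateralEdge : Fin 6 → Fin 4 × Fin 4 :=
  ![(0, 1), (0, 2), (0, 3), (1, 2), (1, 3), (2, 3)]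

section Translations

variable {k : ℕ} {Q : Fin 4 → Fin k → ℝ} {f : Fin 6 → (Fin k → ℝ) →ₗ[ℝ] ℝ}

variable (Q f) in
/-- The translation `t` for which the line `f i = t i` passes through the image under
`x ↦ p + a • x` of the first vertex of the `i`-th edge (hence of both vertices, when `f i`
vanishes along that edge). -/
def homotheticTranslations : (Fin k → ℝ) × ℝ →ₗ[ℝ] Fin 6 → ℝ :=
  LinearMap.pi fun i => (f i).comp
    (LinearMap.fst ℝ _ ℝ + (LinearMap.snd ℝ _ ℝ).smulRight (Q (quadrilateralEdge i).1))

theorem homotheticTranslations_apply (x : (Fin k → ℝ) × ℝ) (i : Fin 6) :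
    homotheticTranslations Q f x i = f i (x.1 + x.2 • Q (quadrilateralEdge i).1) :=
  rfl

theorem homotheticTranslations_apply_of_mem_edge
    (hfQ : ∀ i, f i (Q (quadrilateralEdge i).2 - Q (quadrilateralEdge i).1) = 0)
    (x : (Fin k → ℝ) × ℝ) {i : Fin 6} {v : Fin 4}
    (hv : v = (quadrilateralEdge i).1 ∨ v = (quadrilateralEdge i).2) :
    homotheticTranslations Q f x i = f i (x.1 + x.2 • Q v) := by
  have hQ := hfQ i
  rw [map_sub, sub_eq_zero] at hQ
  rcases hv with rfl | rfl
  · rfl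
  · simp only [homotheticTranslations_apply, map_add, map_smul, hQ]

theorem range_homotheticTranslations_subset_D
    (hfQ : ∀ i, f i (Q (quadrilateralEdge i).2 - Q (quadrilateralEdge i).1) = 0)
    {S : Finset (Fin 6)} (v : Fin 4)
    (hS : ∀ i ∈ S, v = (quadrilateralEdge i).1 ∨ v = (quadrilateralEdge i).2) :
    Set.range (homotheticTranslations Q f) ⊆ D f S := by
  rintro _ ⟨x, rfl⟩
  exact ⟨x.1 + x.2 • Q v, fun i hi => (homotheticTranslations_apply_of_mem_edge hfQ x (hS i hi)).symm⟩

end Translations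

section Plane

variable {Q : Fin 4 → Fin 2 → ℝ} {f : Fin 6 → (Fin 2 → ℝ) →ₗ[ℝ] ℝ}

theorem mem_range_homotheticTranslations (hQ : LinearIndependent ℝ ![Q 1 - Q 0, Q 2 - Q 0])
    (hf₀ : f 0 ≠ 0) (hf₁ : f 1 ≠ 0) (hf₃ : f 3 ≠ 0)
    (hfQ : ∀ i, f i (Q (quadrilateralEdge i).2 - Q (quadrilateralEdge i).1) = 0) {t : Fin 6 → ℝ}
    (ht : t ∈ D f {0, 1, 2} ∩ D f {0, 3, 4} ∩ D f {1, 3, 5}) :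
    t ∈ Set.range (homotheticTranslations Q f) := by
  obtain ⟨⟨⟨P₀, h₀⟩, ⟨P₁, h₁⟩⟩, ⟨P₂, h₂⟩⟩ := ht
  have hQ₀₁ : Q 1 - Q 0 ≠ 0 := hQ.ne_zero 0
  have hQ₀₂ : Q 2 - Q 0 ≠ 0 := hQ.ne_zero 1
  have hQ₁₂ : Q 2 - Q 1 ≠ 0 := fun h => by
    simpa using LinearIndependent.pair_iff.1 hQ (-1) 1 (by rw [← sub_eq_zero.1 h]; module)
  have hV : finrank ℝ (Fin 2 → ℝ) = 2 := finrank_fin_fun ℝ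
  obtain ⟨a, ha⟩ := exists_eq_smul_of_apply_eq_zero hV hf₀ hQ₀₁ (hfQ 0)
    (by simp [h₀ 0, h₁ 0] : f 0 (P₁ - P₀) = 0)
  obtain ⟨b, hb⟩ := exists_eq_smul_of_apply_eq_zero hV hf₁ hQ₀₂ (hfQ 1)
    (by simp [h₀ 1, h₂ 1] : f 1 (P₂ - P₀) = 0)
  obtain ⟨c, hc⟩ := exists_eq_smul_of_apply_eq_zero hV hf₃ hQ₁₂ (hfQ 3)
    (by simp [h₁ 3, h₂ 3] : f 3 (P₂ - P₁) = 0)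
  obtain rfl := smul_eq_of_sub_eq_smul hQ ha hb hc
  have hP₁ : P₀ - a • Q 0 + a • Q 1 = P₁ := by linear_combination (norm := module) -ha
  have hP₂ : P₀ - a • Q 0 + a • Q 2 = P₂ := by linear_combination (norm := module) -hb
  refine ⟨(P₀ - a • Q 0, a), funext fun i => ?_⟩
  fin_cases i <;> simp [homotheticTranslations_apply, quadrilateralEdge, hP₁, hP₂, h₀, h₁, h₂]

theorem injective_homotheticTranslations (hQ : LinearIndependent ℝ ![Q 1 - Q 0, Q 2 - Q 0])
    (hf₀ : f 0 ≠ 0) (hf₁ : f 1 ≠ 0) (hf₃ : f 3 ≠ 0)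
    (hfQ : ∀ i, f i (Q (quadrilateralEdge i).2 - Q (quadrilateralEdge i).1) = 0) :
    Function.Injective (homotheticTranslations Q f) := by
  have hV : finrank ℝ (Fin 2 → ℝ) = 2 := finrank_fin_fun ℝ
  have hQ₀₁ : Q 1 - Q 0 ≠ 0 := hQ.ne_zero 0
  rw [← LinearMap.ker_eq_bot, LinearMap.ker_eq_bot']
  rintro ⟨p, a⟩ h
  -- `p + a • Q 0` lies on the lines `f 0 = 0` and `f 1 = 0`, which meet only at the origin.
  have hy : p + a • Q 0 = 0 := by
    by_contra hy
    obtain ⟨c, hc⟩ : ∃ c : ℝ, Q 1 - Q 0 = c • (p + a • Q 0) :=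
      exists_eq_smul_of_apply_eq_zero hV hf₀ hy (congrFun h 0) (hfQ 0)
    obtain ⟨d, hd⟩ : ∃ d : ℝ, Q 2 - Q 0 = d • (p + a • Q 0) :=
      exists_eq_smul_of_apply_eq_zero hV hf₁ hy (congrFun h 1) (hfQ 1)
    obtain ⟨-, hc0⟩ := LinearIndependent.pair_iff.1 hQ d (-c) (by rw [hc, hd]; module)
    exact hQ₀₁ (by rw [hc, neg_eq_zero.1 hc0, zero_smul])
  -- otherwise `f 3` would vanish along both `Q₀Q₁` and `Q₁Q₂`
  have ha : a = 0 := by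
    by_contra ha
    have h₃ : f 3 (p + a • Q 1) = 0 := congrFun h 3
    rw [show p + a • Q 1 = (p + a • Q 0) + a • (Q 1 - Q 0) by module, hy, zero_add, map_smul,
      smul_eq_zero] at h₃
    obtain ⟨c, hc⟩ : ∃ c : ℝ, Q 2 - Q 1 = c • (Q 1 - Q 0) :=
      exists_eq_smul_of_apply_eq_zero hV hf₃ hQ₀₁ (h₃.resolve_left ha) (hfQ 3)
    simpa using LinearIndependent.pair_iff.1 hQ (c + 1) (-1) (by
      linear_combination (norm := module) -hc)
  simp [ha, show p = 0 by simpa [ha] using hy]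

end Plane

/-- Theorem (Crapo's quadrilateral arrangement is non-very generic): for four
points `Q₁,…,Q₄ ∈ ℝ²`, no three collinear, and six pairwise independent linear
functionals whose kernels are parallel to the sides and diagonals of the
quadrilateral, with `L₁ = {1,2,3}`, `L₂ = {1,4,5}`, `L₃ = {2,4,6}`,
`L₄ = {3,5,6}` (here 0-indexed), one has
`D_{L₁} ∩ D_{L₂} ∩ D_{L₃} ⊆ D_{L₄}` and the simple intersection
`X = D_{L₁} ∩ D_{L₂} ∩ D_{L₃} ∩ D_{L₄}` is a linear subspace of `ℝ⁶` of
codimension 3, strictly less than its multiplicity 4. -/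
theorem crapo_nonVeryGeneric (Q : Fin 4 → (Fin 2 → ℝ))
    (hQ : ∀ i j l : Fin 4, i ≠ j → i ≠ l → j ≠ l →
      ¬ Collinear ℝ ({Q i, Q j, Q l} : Set (Fin 2 → ℝ)))
    (f : Fin 6 → ((Fin 2 → ℝ) →ₗ[ℝ] ℝ))
    (hf : ∀ i j : Fin 6, i ≠ j → LinearIndependent ℝ ![f i, f j])
    (h1 : f 0 (Q 1 - Q 0) = 0) (h2 : f 1 (Q 2 - Q 0) = 0)
    (h3 : f 2 (Q 3 - Q 0) = 0) (h4 : f 3 (Q 2 - Q 1) = 0)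
    (h5 : f 4 (Q 3 - Q 1) = 0) (h6 : f 5 (Q 3 - Q 2) = 0) :
    D f {0, 1, 2} ∩ D f {0, 3, 4} ∩ D f {1, 3, 5} ⊆ D f {2, 4, 5} ∧
    ∃ W : Submodule ℝ (Fin 6 → ℝ),
      (W : Set (Fin 6 → ℝ)) =
        D f {0, 1, 2} ∩ D f {0, 3, 4} ∩ D f {1, 3, 5} ∩ D f {2, 4, 5} ∧
      6 - Module.finrank ℝ W = 3 := by
  have hT := linearIndependent_vsub_of_not_collinear (hQ 0 1 2 (by decide) (by decide) (by decide))
  have hf₀ : f 0 ≠ 0 := (hf 0 1 (by decide)).ne_zero 0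
  have hf₁ : f 1 ≠ 0 := (hf 1 0 (by decide)).ne_zero 0
  have hf₃ : f 3 ≠ 0 := (hf 3 0 (by decide)).ne_zero 0
  have hfQ : ∀ i, f i (Q (quadrilateralEdge i).2 - Q (quadrilateralEdge i).1) = 0 := by
    intro i
    fin_cases i
    exacts [h1, h2, h3, h4, h5, h6]
  have hD {S : Finset (Fin 6)} (v : Fin 4)
      (hS : ∀ i ∈ S, v = (quadrilateralEdge i).1 ∨ v = (quadrilateralEdge i).2) :=
    range_homotheticTranslations_subset_D hfQ v hS
  have hrange : D f {0, 1, 2} ∩ D f {0, 3, 4} ∩ D f {1, 3, 5} ⊆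
      Set.range (homotheticTranslations Q f) := fun t ht =>
    mem_range_homotheticTranslations hT hf₀ hf₁ hf₃ hfQ ht
  refine ⟨hrange.trans (hD 3 (by decide)), LinearMap.range (homotheticTranslations Q f), ?_, ?_⟩
  · rw [LinearMap.coe_range]
    refine subset_antisymm (fun t ht => ?_) fun t ht => hrange ht.1
    exact ⟨⟨⟨hD 0 (by decide) ht, hD 1 (by decide) ht⟩, hD 2 (by decide) ht⟩, hD 3 (by decide) ht⟩
  · rw [LinearMap.finrank_range_of_inj (injective_homotheticTranslations hT hf₀ hf₁ hf₃ hfQ)]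
    simp
end
end

section
/- (Falk's arrangement is non-very generic.) Let f₁,…,f₆ be linear functionals on ℝ³, every three of which are linearly independent, such that the three lines ker f₁ ∩ ker f₂, ker f₃ ∩ ker f₄, and ker f₅ ∩ ker f₆ are all contained in a common 2-dimensional linear subspace of ℝ³ (equivalently, the traces at infinity of the planes satisfy that the three points H̄ᵢ ∩ H̄_{i+1} ∩ H_∞, i = 1,3,5, lie on a line at infinity). Let L₁ = {1,2,3,4}, L₂ = {1,2,5,6}, L₃ = {3,4,5,6}. Then D_{L₁} ∩ D_{L₂} ⊆ D_{L₃}, and consequently X = D_{L₁} ∩ D_{L₂} ∩ D_{L₃} is a linear subspace of ℝ⁶ of codimension 2 (rank 2, strictly less than its multiplicity 3). -/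
/-!
Choose a nonzero functional `g` vanishing on the plane `W`. As `ker f₀ ⊓ ker f₁ ≤ ker g`, the
functional `g` lies in the span of `f₀, f₁`, and likewise of `f₂, f₃` and of `f₄, f₅`:
`g = a₀ f₀ + a₁ f₁ = a₂ f₂ + a₃ f₃ = a₄ f₄ + a₅ f₅`, where `a₃, a₅ ≠ 0` by genericity.
For `{i, j, k, l}` with `fᵢ, fⱼ, f_k` independent, the first three translated planes always meet
in a point, so `t ∈ D_{ijkl}` exactly when the fourth plane passes through it, i.e. when
`aᵢ tᵢ + aⱼ tⱼ = a_k t_k + a_l t_l`. The equation for `L₃` is the difference of those for `L₁`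
and `L₂`, which gives the inclusion, and the intersection is cut out by two independent linear
equations.
-/

noncomputable section

open Module LinearMap

section DualFamily

variable {K V : Type*} [Field K] [AddCommGroup V] [Module K V]

theorem LinearMap.pi_surjective_of_linearIndependent {ι : Type*} [Finite ι] {L : ι → V →ₗ[K] K}
    (hL : LinearIndependent K L) : Function.Surjective (LinearMap.pi L) := by
  have hLfun : LinearIndependent K fun i x => L i x :=
    hL.map' (LinearMap.ltoFun K V K K) (LinearMap.ker_eq_bot.2 DFunLike.coe_injective)
  rw [← LinearMap.range_eq_top, eq_top_iff,
    ← span_flip_eq_top_iff_linearIndependent.2 hLfun, Submodule.span_le]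
  rintro _ ⟨x, rfl⟩
  exact ⟨x, rfl⟩

theorem finrank_ker_pi_add_card [FiniteDimensional K V] {ι : Type*} [Fintype ι]
    {L : ι → V →ₗ[K] K} (hL : LinearIndependent K L) :
    finrank K (ker (LinearMap.pi L)) + Fintype.card ι = finrank K V := by
  rw [← LinearMap.finrank_range_add_finrank_ker (LinearMap.pi L),
    LinearMap.range_eq_top.2 (LinearMap.pi_surjective_of_linearIndependent hL),
    finrank_top, finrank_fintype_fun_eq_card, add_comm]

theorem exists_eq_smul_add_smul_of_inf_ker_le_ker {f₁ f₂ g : V →ₗ[K] K}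
    (h : ker f₁ ⊓ ker f₂ ≤ ker g) : ∃ a b : K, g = a • f₁ + b • f₂ := by
  have hg : g ∈ Submodule.span K (Set.range ![f₁, f₂]) :=
    mem_span_of_iInf_ker_le_ker fun x hx =>
      h ⟨(Submodule.mem_iInf _).1 hx 0, (Submodule.mem_iInf _).1 hx 1⟩
  obtain ⟨c, hc⟩ := (Submodule.mem_span_range_iff_exists_fun K).1 hg
  exact ⟨c 0, c 1, by simpa [Fin.sum_univ_two] using hc.symm⟩

theorem exists_ne_zero_le_ker_of_finrank_lt [FiniteDimensional K V] {W : Submodule K V}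
    (hW : finrank K W < finrank K V) : ∃ g : V →ₗ[K] K, g ≠ 0 ∧ W ≤ ker g := by
  obtain ⟨g, hg, hWg⟩ := W.exists_dual_map_eq_bot_of_lt_top
    (Submodule.lt_top_of_finrank_lt_finrank hW) inferInstance
  exact ⟨g, hg, LinearMap.le_ker_iff_map.2 hWg⟩

theorem coeff_ne_zero_of_smul_add_smul_eq {f₁ f₂ f₃ f₄ : V →ₗ[K] K} {a b c d : K}
    (hind : LinearIndependent K ![f₁, f₂, f₃]) (hne : a • f₁ + b • f₂ ≠ 0)
    (h : a • f₁ + b • f₂ = c • f₃ + d • f₄) : d ≠ 0 := by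
  rintro rfl
  have hzero : ∑ m, ![a, b, -c] m • ![f₁, f₂, f₃] m = 0 := by
    simp only [Fin.sum_univ_three, Matrix.cons_val, h, zero_smul, add_zero]
    module
  have hcoef := Fintype.linearIndependent_iff.1 hind _ hzero
  exact hne (by simp [show a = 0 from hcoef 0, show b = 0 from hcoef 1])

theorem linearIndependent_pair_of_apply {u v : V →ₗ[K] K} {x y : V}
    (hux : u x ≠ 0) (hvx : v x = 0) (hvy : v y ≠ 0) : LinearIndependent K ![u, v] := by
  refine LinearIndependent.pair_iff.2 fun s t hst => ?_
  have hs : s = 0 := by simpa [hux, hvx] using congr($hst x)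
  subst hs
  exact ⟨rfl, by simpa [hvy] using congr($hst y)⟩

end DualFamily

theorem linearIndependent_triple_of_card_eq_three {R M ι : Type*} [Semiring R] [AddCommMonoid M]
    [Module R M] [DecidableEq ι] {v : ι → M}
    (hv : ∀ S : Finset ι, S.card = 3 → LinearIndependent R (fun i : S => v i))
    {i j k : ι} (hij : i ≠ j) (hik : i ≠ k) (hjk : j ≠ k) :
    LinearIndependent R ![v i, v j, v k] := by
  have hS : ({i, j, k} : Finset ι).card = 3 := Finset.card_eq_three.2 ⟨i, j, k, hij, hik, hjk, rfl⟩
  have h := (hv _ hS).comp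
    (![⟨i, by simp⟩, ⟨j, by simp⟩, ⟨k, by simp⟩] : Fin 3 → ({i, j, k} : Finset ι))
    (by intro a b hab; fin_cases a <;> fin_cases b <;> simp_all)
  convert h using 1
  ext m
  fin_cases m <;> rfl

theorem mem_D_iff_of_smul_add_smul_eq {n k : ℕ} {f : Fin n → (Fin k → ℝ) →ₗ[ℝ] ℝ}
    {i₁ i₂ i₃ i₄ : Fin n} {a b c d : ℝ} (hind : LinearIndependent ℝ ![f i₁, f i₂, f i₃])
    (hd : d ≠ 0) (h : a • f i₁ + b • f i₂ = c • f i₃ + d • f i₄) (t : Fin n → ℝ) :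
    t ∈ D f {i₁, i₂, i₃, i₄} ↔ a * t i₁ + b * t i₂ = c * t i₃ + d * t i₄ := by
  have hf x : a * f i₁ x + b * f i₂ x = c * f i₃ x + d * f i₄ x := by simpa using congr($h x)
  constructor
  · rintro ⟨x, hx⟩
    rw [← hx i₁ (by simp), ← hx i₂ (by simp), ← hx i₃ (by simp), ← hx i₄ (by simp)]
    exact hf x
  · intro ht
    obtain ⟨x, hx⟩ := LinearMap.pi_surjective_of_linearIndependent hind ![t i₁, t i₂, t i₃]
    have h₁ : f i₁ x = t i₁ := congr_fun hx 0
    have h₂ : f i₂ x = t i₂ := congr_fun hx 1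
    have h₃ : f i₃ x = t i₃ := congr_fun hx 2
    have h₄ : f i₄ x = t i₄ := by
      have := hf x
      rw [h₁, h₂, h₃] at this
      exact mul_left_cancel₀ hd (by linarith)
    refine ⟨x, ?_⟩
    simp only [Finset.mem_insert, Finset.mem_singleton]
    rintro _ (rfl | rfl | rfl | rfl) <;> assumption

theorem falk_coefficients {K V : Type*} [Field K] [AddCommGroup V] [Module K V]
    {f : Fin 6 → V →ₗ[K] K} (h₀₁₂ : LinearIndependent K ![f 0, f 1, f 2])
    (h₀₁₄ : LinearIndependent K ![f 0, f 1, f 4]) {g : V →ₗ[K] K} (hg : g ≠ 0)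
    (h₀₁ : ker (f 0) ⊓ ker (f 1) ≤ ker g) (h₂₃ : ker (f 2) ⊓ ker (f 3) ≤ ker g)
    (h₄₅ : ker (f 4) ⊓ ker (f 5) ≤ ker g) :
    ∃ a₀ a₁ a₂ a₃ a₄ a₅ : K, a₃ ≠ 0 ∧ a₅ ≠ 0 ∧
      a₀ • f 0 + a₁ • f 1 = a₂ • f 2 + a₃ • f 3 ∧ a₀ • f 0 + a₁ • f 1 = a₄ • f 4 + a₅ • f 5 := by
  obtain ⟨a₀, a₁, hg₀₁⟩ := exists_eq_smul_add_smul_of_inf_ker_le_ker h₀₁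
  obtain ⟨a₂, a₃, hg₂₃⟩ := exists_eq_smul_add_smul_of_inf_ker_le_ker h₂₃
  obtain ⟨a₄, a₅, hg₄₅⟩ := exists_eq_smul_add_smul_of_inf_ker_le_ker h₄₅
  have hne : a₀ • f 0 + a₁ • f 1 ≠ 0 := hg₀₁ ▸ hg
  exact ⟨a₀, a₁, a₂, a₃, a₄, a₅,
    coeff_ne_zero_of_smul_add_smul_eq h₀₁₂ hne (hg₀₁.symm.trans hg₂₃),
    coeff_ne_zero_of_smul_add_smul_eq h₀₁₄ hne (hg₀₁.symm.trans hg₄₅),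
    hg₀₁.symm.trans hg₂₃, hg₀₁.symm.trans hg₄₅⟩

theorem falk_solution_space {a₀ a₁ a₂ a₃ a₄ a₅ : ℝ} (ha₃ : a₃ ≠ 0) (ha₅ : a₅ ≠ 0) :
    ∃ X : Submodule ℝ (Fin 6 → ℝ),
      (X : Set (Fin 6 → ℝ)) = {t | a₀ * t 0 + a₁ * t 1 = a₂ * t 2 + a₃ * t 3 ∧
        a₀ * t 0 + a₁ * t 1 = a₄ * t 4 + a₅ * t 5} ∧
      finrank ℝ X = 4 := by
  let u : (Fin 6 → ℝ) →ₗ[ℝ] ℝ := a₀ • proj 0 + a₁ • proj 1 - a₂ • proj 2 - a₃ • proj 3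
  let v : (Fin 6 → ℝ) →ₗ[ℝ] ℝ := a₀ • proj 0 + a₁ • proj 1 - a₄ • proj 4 - a₅ • proj 5
  have huv : LinearIndependent ℝ ![u, v] :=
    linearIndependent_pair_of_apply (x := Pi.single 3 1) (y := Pi.single 5 1)
      (by simp [u, ha₃]) (by simp [v]) (by simp [v, ha₅])
  refine ⟨ker (LinearMap.pi ![u, v]), ?_, ?_⟩
  · ext t
    simp only [SetLike.mem_coe, mem_ker, funext_iff, pi_apply, Pi.zero_apply, Fin.forall_fin_two,
      Matrix.cons_val_zero, Matrix.cons_val_one, Set.mem_ofPred_eq, u, v, LinearMap.sub_apply,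
      LinearMap.add_apply, LinearMap.smul_apply, proj_apply, smul_eq_mul]
    constructor <;> intro h <;> constructor <;> linarith [h.1, h.2]
  · have hrank := finrank_ker_pi_add_card huv
    rw [Fintype.card_fin, finrank_fin_fun] at hrank
    omega

/-- Theorem (Falk's arrangement is non-very generic): for six linear functionals
on `ℝ³`, every three linearly independent, such that the three lines
`ker f₁ ∩ ker f₂`, `ker f₃ ∩ ker f₄`, `ker f₅ ∩ ker f₆` lie in a common
2-dimensional subspace, with `L₁ = {1,2,3,4}`, `L₂ = {1,2,5,6}`,
`L₃ = {3,4,5,6}` (here 0-indexed) one has `D_{L₁} ∩ D_{L₂} ⊆ D_{L₃}`, and the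
simple intersection `X = D_{L₁} ∩ D_{L₂} ∩ D_{L₃}` is a linear subspace of `ℝ⁶`
of codimension 2, strictly less than its multiplicity 3. -/
theorem falk_nonVeryGeneric (f : Fin 6 → ((Fin 3 → ℝ) →ₗ[ℝ] ℝ))
    (hf : ∀ S : Finset (Fin 6), S.card = 3 →
      LinearIndependent ℝ (fun i : S => f (i : Fin 6)))
    (hdep : ∃ W : Submodule ℝ (Fin 3 → ℝ), Module.finrank ℝ W = 2 ∧
      LinearMap.ker (f 0) ⊓ LinearMap.ker (f 1) ≤ W ∧
      LinearMap.ker (f 2) ⊓ LinearMap.ker (f 3) ≤ W ∧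
      LinearMap.ker (f 4) ⊓ LinearMap.ker (f 5) ≤ W) :
    D f {0, 1, 2, 3} ∩ D f {0, 1, 4, 5} ⊆ D f {2, 3, 4, 5} ∧
    ∃ X : Submodule ℝ (Fin 6 → ℝ),
      (X : Set (Fin 6 → ℝ)) =
        D f {0, 1, 2, 3} ∩ D f {0, 1, 4, 5} ∩ D f {2, 3, 4, 5} ∧
      6 - Module.finrank ℝ X = 2 := by
  obtain ⟨W, hW, h₀₁, h₂₃, h₄₅⟩ := hdep
  obtain ⟨g, hg, hWg⟩ := exists_ne_zero_le_ker_of_finrank_lt (W := W) (by simp [hW])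
  have hind (i j k : Fin 6) (hij : i ≠ j) (hik : i ≠ k) (hjk : j ≠ k) :=
    linearIndependent_triple_of_card_eq_three hf hij hik hjk
  obtain ⟨a₀, a₁, a₂, a₃, a₄, a₅, ha₃, ha₅, h₁, h₂⟩ :=
    falk_coefficients (hind 0 1 2 (by decide) (by decide) (by decide))
      (hind 0 1 4 (by decide) (by decide) (by decide)) hg
      (h₀₁.trans hWg) (h₂₃.trans hWg) (h₄₅.trans hWg)
  have hD₁ := mem_D_iff_of_smul_add_smul_eq
    (hind 0 1 2 (by decide) (by decide) (by decide)) ha₃ h₁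
  have hD₂ := mem_D_iff_of_smul_add_smul_eq
    (hind 0 1 4 (by decide) (by decide) (by decide)) ha₅ h₂
  have hD₃ := mem_D_iff_of_smul_add_smul_eq
    (hind 2 3 4 (by decide) (by decide) (by decide)) ha₅ (h₁.symm.trans h₂)
  have hsub : D f {0, 1, 2, 3} ∩ D f {0, 1, 4, 5} ⊆ D f {2, 3, 4, 5} := fun t ⟨ht₁, ht₂⟩ =>
    (hD₃ t).2 (by linarith [(hD₁ t).1 ht₁, (hD₂ t).1 ht₂])
  obtain ⟨X, hX, hXrank⟩ :=
    falk_solution_space (a₀ := a₀) (a₁ := a₁) (a₂ := a₂) (a₄ := a₄) ha₃ ha₅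
  refine ⟨hsub, X, ?_, by omega⟩
  rw [Set.inter_eq_left.2 hsub, hX]
  ext t
  simp only [Set.mem_ofPred_eq, Set.mem_inter_iff, hD₁, hD₂]
end
end
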